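/- Adding one rank-one update increases the determinant: with V_{t+1} = V_t + f f^T for V_t positive definite and f ∈ ℝ^k, det(V_{t+1}) = det(V_t) · (1 + ‖f‖²_{V_t^{-1}}). Consequently, if ‖f_t‖ ≤ L for all t, then Σ_{t=1}^n min(1, ‖f_t‖²_{V_t^{-1}}) ≤ 2 log( det(V_{n+1}) / det(λ I) ) ≤ 2k log(1 + nL²/(kλ)). -/

import Mathlib

/-!
The matrix determinant lemma turns each rank-one update into the factor
`1 + ‖f_t‖²_{V_t⁻¹}` of the determinant, so `log det` telescopes to `∑ log (1 + ‖f_t‖²_{V_t⁻¹})`,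
and `min 1 x ≤ 2 log (1 + x)` gives the first inequality. For the second, AM-GM (Jensen for `log`)
on the eigenvalues bounds `det V` by `(tr V / k) ^ k`, while `tr V_n = kλ + ∑ ‖f_t‖² ≤ kλ + nL²`.
-/

open Matrix Finset

namespace Matrix

variable {n : Type*} [Fintype n] [DecidableEq n]

theorem det_add_vecMulVec {R : Type*} [CommRing R] {A : Matrix n n R} (hA : IsUnit A.det)
    (u v : n → R) : (A + vecMulVec u v).det = A.det * (1 + v ⬝ᵥ (A⁻¹ *ᵥ u)) := by
  rw [vecMulVec_eq Unit, det_add_replicateCol_mul_replicateRow hA, ← replicateRow_vecMul,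
    det_unique (1 + _), add_apply, one_apply_eq, replicateRow_mul_replicateCol_apply,
    dotProduct_mulVec]

theorem PosSemidef.dotProduct_inv_mulVec_nonneg {A : Matrix n n ℝ} (hA : A.PosSemidef)
    (x : n → ℝ) : 0 ≤ x ⬝ᵥ (A⁻¹ *ᵥ x) := by
  simpa using hA.inv.dotProduct_mulVec_nonneg x

theorem PosDef.log_det_le [Nonempty n] {A : Matrix n n ℝ} (hA : A.PosDef) :
    Real.log A.det ≤ Fintype.card n * Real.log (A.trace / Fintype.card n) := by
  have hk : (0 : ℝ) < Fintype.card n := by exact_mod_cast Fintype.card_pos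
  have jensen := strictConcaveOn_log_Ioi.concaveOn.le_map_sum (t := univ)
    (w := fun _ => (Fintype.card n : ℝ)⁻¹) (p := hA.1.eigenvalues) (fun _ _ => by positivity)
    (by simp [card_univ, hk.ne']) (fun i _ => hA.eigenvalues_pos i)
  rw [hA.1.det_eq_prod_eigenvalues, hA.1.trace_eq_sum_eigenvalues]
  simp only [RCLike.ofReal_real_eq_id, id, smul_eq_mul, ← mul_sum] at jensen ⊢
  rwa [Real.log_prod (fun i _ => (hA.eigenvalues_pos i).ne'), div_eq_inv_mul,
    ← inv_mul_le_iff₀ hk]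

end Matrix

theorem min_one_le_two_mul_log_one_add {x : ℝ} (hx : 0 ≤ x) :
    min 1 x ≤ 2 * Real.log (1 + x) :=
  calc min 1 x ≤ 2 * (2 * x / (x + 2)) := by
        rw [mul_div_assoc', le_div_iff₀ (by linarith)]
        rcases le_total 1 x with h | h
        · rw [min_eq_left h]; linarith
        · rw [min_eq_right h]; nlinarith
    _ ≤ 2 * Real.log (1 + x) := by gcongr; exact Real.le_log_one_add_of_nonneg hx

section RankOneUpdates

variable {n : Type*} [Fintype n] {V : ℕ → Matrix n n ℝ} {F : ℕ → n → ℝ}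

theorem posDef_of_succ_eq_add_vecMulVec (hV : ∀ t, V (t + 1) = V t + vecMulVec (F t) (F t))
    (h0 : (V 0).PosDef) (t : ℕ) : (V t).PosDef := by
  induction t with
  | zero => exact h0
  | succ t ih =>
    rw [hV t]
    simpa using ih.add_posSemidef (posSemidef_vecMulVec_self_star (F t))

theorem trace_eq_trace_zero_add_sum (hV : ∀ t, V (t + 1) = V t + vecMulVec (F t) (F t))
    (m : ℕ) : (V m).trace = (V 0).trace + ∑ t ∈ range m, F t ⬝ᵥ F t := by
  induction m with
  | zero => simp
  | succ m ih => rw [hV m, trace_add, trace_vecMulVec, ih, sum_range_succ, add_assoc]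

theorem log_det_sub_log_det_zero [DecidableEq n]
    (hV : ∀ t, V (t + 1) = V t + vecMulVec (F t) (F t)) (h0 : (V 0).PosDef) (m : ℕ) :
    Real.log (V m).det - Real.log (V 0).det =
      ∑ t ∈ range m, Real.log (1 + F t ⬝ᵥ ((V t)⁻¹ *ᵥ F t)) := by
  have hpos := posDef_of_succ_eq_add_vecMulVec hV h0
  induction m with
  | zero => simp
  | succ m ih =>
    have hquad := (hpos m).posSemidef.dotProduct_inv_mulVec_nonneg (F m)
    rw [sum_range_succ, ← ih, hV m, det_add_vecMulVec (hpos m).det_pos.ne'.isUnit,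
      Real.log_mul (hpos m).det_pos.ne' (by positivity)]
    ring

theorem sum_min_one_le_two_mul_log_det_sub [DecidableEq n]
    (hV : ∀ t, V (t + 1) = V t + vecMulVec (F t) (F t)) (h0 : (V 0).PosDef) (m : ℕ) :
    ∑ t ∈ range m, min 1 (F t ⬝ᵥ ((V t)⁻¹ *ᵥ F t)) ≤
      2 * (Real.log (V m).det - Real.log (V 0).det) := by
  rw [log_det_sub_log_det_zero hV h0, mul_sum]
  exact sum_le_sum fun t _ => min_one_le_two_mul_log_one_add
    ((posDef_of_succ_eq_add_vecMulVec hV h0 t).posSemidef.dotProduct_inv_mulVec_nonneg (F t))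

theorem log_det_sub_log_det_zero_le [DecidableEq n] [Nonempty n]
    (hV : ∀ t, V (t + 1) = V t + vecMulVec (F t) (F t)) {l L : ℝ} (hl : 0 < l)
    (hV0 : V 0 = l • 1) (hF : ∀ t, F t ⬝ᵥ F t ≤ L ^ 2) (m : ℕ) :
    Real.log (V m).det - Real.log (V 0).det ≤
      Fintype.card n * Real.log (1 + m * L ^ 2 / (Fintype.card n * l)) := by
  set k : ℝ := (Fintype.card n : ℝ)
  have hk : 0 < k := by simp [k, Fintype.card_pos]
  have hVm : (V m).PosDef := posDef_of_succ_eq_add_vecMulVec hV (hV0 ▸ PosDef.one.smul hl) m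
  have htrace : (V m).trace / k ≤ l * (1 + m * L ^ 2 / (k * l)) := by
    have hFF := sum_le_sum fun t (_ : t ∈ range m) => hF t
    rw [sum_const, card_range, nsmul_eq_mul] at hFF
    rw [trace_eq_trace_zero_add_sum hV, hV0, trace_smul, trace_one, div_le_iff₀ hk, smul_eq_mul]
    field_simp
    linarith
  calc Real.log (V m).det - Real.log (V 0).det
      ≤ k * Real.log ((V m).trace / k) - k * Real.log l := by
        rw [hV0, det_smul, det_one, mul_one, Real.log_pow]
        gcongr
        exact hVm.log_det_le
    _ ≤ k * Real.log (l * (1 + m * L ^ 2 / (k * l))) - k * Real.log l := by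
        gcongr
        exact div_pos hVm.trace_pos hk
    _ = k * Real.log (1 + m * L ^ 2 / (k * l)) := by
        rw [Real.log_mul hl.ne' (by positivity)]
        ring

end RankOneUpdates

theorem stmt14_general (k : ℕ) (hk : 0 < k) (n : ℕ) (l L : ℝ) (hl : 0 < l)
    (F : ℕ → Fin k → ℝ) (hF : ∀ t, Real.sqrt (F t ⬝ᵥ F t) ≤ L)
    (V : ℕ → Matrix (Fin k) (Fin k) ℝ)
    (hV0 : V 0 = l • (1 : Matrix (Fin k) (Fin k) ℝ))
    (hVs : ∀ t, V (t + 1) = V t + Matrix.vecMulVec (F t) (F t)) :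
    (∀ (W : Matrix (Fin k) (Fin k) ℝ) (f : Fin k → ℝ), W.PosDef →
      (W + Matrix.vecMulVec f f).det = W.det * (1 + f ⬝ᵥ (W⁻¹ *ᵥ f))) ∧
    (∑ t ∈ range n, min 1 (F t ⬝ᵥ ((V t)⁻¹ *ᵥ F t)))
      ≤ 2 * Real.log ((V n).det / (l • (1 : Matrix (Fin k) (Fin k) ℝ)).det) ∧
    2 * Real.log ((V n).det / (l • (1 : Matrix (Fin k) (Fin k) ℝ)).det)
      ≤ 2 * k * Real.log (1 + n * L ^ 2 / (k * l)) := by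
  have h0 : (V 0).PosDef := hV0 ▸ PosDef.one.smul hl
  have hVn := posDef_of_succ_eq_add_vecMulVec hVs h0 n
  have hlog_div : Real.log ((V n).det / (l • (1 : Matrix (Fin k) (Fin k) ℝ)).det) =
      Real.log (V n).det - Real.log (V 0).det := by
    rw [Real.log_div hVn.det_pos.ne' (hV0 ▸ h0.det_pos.ne'), hV0]
  have : Nonempty (Fin k) := ⟨⟨0, hk⟩⟩
  refine ⟨fun W f hW => det_add_vecMulVec hW.det_pos.ne'.isUnit f f, ?_, ?_⟩
  · simpa only [hlog_div] using sum_min_one_le_two_mul_log_det_sub hVs h0 n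
  · have := log_det_sub_log_det_zero_le hVs hl hV0 (fun t => (Real.sqrt_le_iff.mp (hF t)).2) n
    rw [Fintype.card_fin] at this
    rw [hlog_div]
    linarith

/-- Rank-one determinant update and the elliptical potential lemma:
`det(V + ffᵀ) = det V · (1 + ‖f‖²_{V⁻¹})`, and for the design matrices
`V_0 = λI`, `V_{t+1} = V_t + f_t f_tᵀ` with `‖f_t‖ ≤ L`,
`∑_{t<n} min(1, ‖f_t‖²_{V_t⁻¹}) ≤ 2 log(det V_n / det(λI)) ≤ 2k log(1 + nL²/(kλ))`. -/
theorem stmt14 (k : ℕ) (hk : 0 < k) (n : ℕ) (l L : ℝ) (hl : 0 < l) (hL : 0 ≤ L)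
    (F : ℕ → Fin k → ℝ) (hF : ∀ t, Real.sqrt (F t ⬝ᵥ F t) ≤ L)
    (V : ℕ → Matrix (Fin k) (Fin k) ℝ)
    (hV0 : V 0 = l • (1 : Matrix (Fin k) (Fin k) ℝ))
    (hVs : ∀ t, V (t + 1) = V t + Matrix.vecMulVec (F t) (F t)) :
    (∀ (W : Matrix (Fin k) (Fin k) ℝ) (f : Fin k → ℝ), W.PosDef →
      (W + Matrix.vecMulVec f f).det = W.det * (1 + f ⬝ᵥ (W⁻¹ *ᵥ f))) ∧
    (∑ t ∈ range n, min 1 (F t ⬝ᵥ ((V t)⁻¹ *ᵥ F t)))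
      ≤ 2 * Real.log ((V n).det / (l • (1 : Matrix (Fin k) (Fin k) ℝ)).det) ∧
    2 * Real.log ((V n).det / (l • (1 : Matrix (Fin k) (Fin k) ℝ)).det)
      ≤ 2 * k * Real.log (1 + n * L ^ 2 / (k * l)) :=
  stmt14_general k hk n l L hl F hF V hV0 hVs
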